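/- arXiv:0904.1786 — 2 statements merged into one kernel-verified Lean document; each statement's English description precedes it below -/
import Mathlib

section
/- The operation ▷ is antitone in the first argument and monotone in the second: if x ≤ x' and y' ≤ y in the Bruhat order, then x' ▷ y' ≤ x ▷ y. -/
/-- The Bruhat order on a Coxeter group, via the subword property: `x ≤ y` iff some
reduced word for `y` has a subword whose product is `x`. -/
def CoxeterSystem.bruhatLE {B W : Type*} [Group W] {M : CoxeterMatrix B}
    (cs : CoxeterSystem M W) (x y : W) : Prop :=
  ∃ ω ω' : List B, cs.IsReduced ω ∧ cs.wordProd ω = y ∧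
    List.Sublist ω' ω ∧ cs.wordProd ω' = x

/-- The set of products `u * y` with `u ≤ x` in the Bruhat order. -/
def CoxeterSystem.triSet {B W : Type*} [Group W] {M : CoxeterMatrix B}
    (cs : CoxeterSystem M W) (x y : W) : Set W :=
  {w | ∃ u : W, cs.bruhatLE u x ∧ w = u * y}

/-- `m` is the unique minimal element of `S` with respect to the Bruhat order. -/
def CoxeterSystem.IsUniqueBruhatMin {B W : Type*} [Group W] {M : CoxeterMatrix B}
    (cs : CoxeterSystem M W) (S : Set W) (m : W) : Prop :=
  (m ∈ S ∧ ∀ z ∈ S, cs.bruhatLE z m → z = m) ∧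
    ∀ z ∈ S, (∀ z' ∈ S, cs.bruhatLE z' z → z' = z) → z = m

/-! The heart of the matter is that for every `u` and every `y' ≤ y` there is some `v ≤ u` with
`v * y' ≤ u * y`; this follows by induction along a reduced word of `u` from the lifting property
of the Bruhat order. Then, writing `x ▷ y = u * y` with `u ≤ x`, we get `v ≤ u ≤ x ≤ x'`,
so `v * y'` lies in the set whose unique minimal element is `x' ▷ y'`, whence
`x' ▷ y' ≤ v * y' ≤ u * y = x ▷ y`.

The lifting property needs the subword property for *every* reduced word, not just for some
reduced word as in the definition of `bruhatLE`. It comes from identifying `bruhatLE` with the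
order generated by length-increasing right multiplications by reflections, and the bridge between
the two is the strong exchange condition, proved with Tits' representation of `W` on
`W × ZMod 2`. -/

theorem pow_mul_mul_pow_eq_iff {G : Type*} [Group G] {p q c : G} (hpq : p * q = 1)
    (hc : c * p = q * c) (x : G) (k : ℕ) : p ^ k * x * q ^ k = c ↔ x = q ^ (2 * k) * c := by
  obtain rfl := eq_inv_of_mul_eq_one_right hpq
  have hck : c * p ^ k = p⁻¹ ^ k * c := (SemiconjBy.pow_right hc k).eq
  rw [two_mul, pow_add, mul_assoc _ _ c, ← hck, inv_pow]
  constructor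
  · rintro rfl; group
  · rintro rfl; group

namespace CoxeterSystem

variable {B W : Type*} [Group W] {M : CoxeterMatrix B} (cs : CoxeterSystem M W)

local prefix:100 "s" => cs.simple
local prefix:100 "π" => cs.wordProd
local prefix:100 "ℓ" => cs.length
local prefix:100 "ris" => cs.rightInvSeq

open scoped Classical List

theorem simple_mul_mul_simple_eq_iff (i : B) (x y : W) :
    s i * x * s i = y ↔ x = s i * y * s i := by
  constructor
  · rintro rfl; simp [mul_assoc]
  · rintro rfl; simp [mul_assoc]

noncomputable def simpleParityPerm (i : B) : Equiv.Perm (W × ZMod 2) :=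
  Function.Involutive.toPerm (fun p => (s i * p.1 * s i, p.2 + if p.1 = s i then 1 else 0)) <| by
    rintro ⟨t, z⟩
    have hconj : s i * t * s i = s i ↔ t = s i := by
      rw [simple_mul_mul_simple_eq_iff, simple_mul_simple_cancel_right]
    ext
    · simp [mul_assoc]
    · by_cases h : t = s i <;> simp [hconj, h, add_assoc, CharTwo.add_self_eq_zero]

theorem simpleParityPerm_apply (i : B) (t : W) (z : ZMod 2) :
    cs.simpleParityPerm i (t, z) = (s i * t * s i, z + if t = s i then 1 else 0) := rfl

theorem simpleParityPerm_mul_pow_apply (i i' : B) (k : ℕ) (t : W) (z : ZMod 2) :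
    ((cs.simpleParityPerm i * cs.simpleParityPerm i') ^ k) (t, z) =
      ((s i * s i') ^ k * t * (s i' * s i) ^ k,
        z + ∑ r ∈ Finset.range (2 * k), if t = (s i' * s i) ^ r * s i' then 1 else 0) := by
  have hpq : s i * s i' * (s i' * s i) = 1 := by simp [mul_assoc]
  induction k with
  | zero => simp
  | succ k ih =>
    have e₁ := pow_mul_mul_pow_eq_iff (c := s i') hpq (by simp [mul_assoc]) t k
    have e₂ : s i' * ((s i * s i') ^ k * t * (s i' * s i) ^ k) * s i' = s i ↔
        t = (s i' * s i) ^ (2 * k + 1) * s i' := by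
      rw [simple_mul_mul_simple_eq_iff, pow_mul_mul_pow_eq_iff hpq (by simp [mul_assoc]), pow_succ,
        mul_assoc _ (s i' * s i)]
    rw [pow_succ', Equiv.Perm.mul_apply, ih, Equiv.Perm.mul_apply, simpleParityPerm_apply,
      simpleParityPerm_apply, e₁, e₂, Nat.mul_succ, Finset.sum_range_succ,
      Finset.sum_range_succ]
    ext
    · rw [pow_succ' (s i * s i') k, pow_succ (s i' * s i) k]; simp only [mul_assoc]
    · simp only [add_assoc]

theorem isLiftable_simpleParityPerm : M.IsLiftable cs.simpleParityPerm := by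
  intro i i'
  -- the summand has period `M i i'` in `r`, so the sum over `2 * M i i'` terms counts
  -- each term twice
  ext ⟨t, z⟩ : 1
  have hperiod : ∀ r, (s i' * s i) ^ (M i i' + r) = (s i' * s i) ^ r := by
    simp [pow_add]
  rw [simpleParityPerm_mul_pow_apply, two_mul, Finset.sum_range_add]
  simp [hperiod, CharTwo.add_self_eq_zero]

noncomputable def reflectionRep : W →* Equiv.Perm (W × ZMod 2) :=
  cs.lift ⟨cs.simpleParityPerm, cs.isLiftable_simpleParityPerm⟩

theorem reflectionRep_simple (i : B) : cs.reflectionRep (s i) = cs.simpleParityPerm i :=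
  cs.lift_apply_simple cs.isLiftable_simpleParityPerm i

theorem reflectionRep_wordProd_apply (ω : List B) (t : W) (z : ZMod 2) :
    cs.reflectionRep (π ω) (t, z) = (π ω * t * (π ω)⁻¹, z + (ris ω).count t) := by
  induction ω with
  | nil => simp
  | cons i ω ih =>
    have hris : ris (i :: ω) = ((π ω)⁻¹ * s i * π ω) :: ris ω := rfl
    have hcond : π ω * t * (π ω)⁻¹ = s i ↔ (π ω)⁻¹ * s i * π ω = t := by
      constructor
      · intro h; rw [← h]; group
      · rintro rfl; group
    rw [wordProd_cons, map_mul, Equiv.Perm.mul_apply, ih, reflectionRep_simple,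
      simpleParityPerm_apply, hris, List.count_cons]
    ext
    · simp [mul_assoc]
    · by_cases h : (π ω)⁻¹ * s i * π ω = t <;> simp [hcond, h, add_assoc]

noncomputable def inversionParity (w t : W) : ZMod 2 := (cs.reflectionRep w (t, 0)).2

theorem inversionParity_wordProd (ω : List B) (t : W) :
    cs.inversionParity (π ω) t = (ris ω).count t := by
  simp [inversionParity, reflectionRep_wordProd_apply]

theorem reflectionRep_apply (w t : W) (z : ZMod 2) :
    cs.reflectionRep w (t, z) = (w * t * w⁻¹, z + cs.inversionParity w t) := by
  obtain ⟨ω, -, rfl⟩ := cs.exists_isReduced w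
  rw [reflectionRep_wordProd_apply, inversionParity_wordProd]

theorem inversionParity_mul (w v t : W) :
    cs.inversionParity (w * v) t =
      cs.inversionParity v t + cs.inversionParity w (v * t * v⁻¹) := by
  rw [inversionParity, map_mul, Equiv.Perm.mul_apply, reflectionRep_apply, reflectionRep_apply,
    zero_add]

theorem inversionParity_one (t : W) : cs.inversionParity 1 t = 0 := by
  simpa using cs.inversionParity_wordProd [] t

theorem inversionParity_simple (i : B) (t : W) :
    cs.inversionParity (s i) t = if t = s i then 1 else 0 := by
  simp [inversionParity, reflectionRep_simple, simpleParityPerm_apply]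

theorem inversionParity_self {t : W} (ht : cs.IsReflection t) : cs.inversionParity t t = 1 := by
  obtain ⟨v, i, rfl⟩ := ht
  have hconj : v⁻¹ * (v * s i * v⁻¹) * v⁻¹⁻¹ = s i := by group
  have hinv : cs.inversionParity v⁻¹ (v * s i * v⁻¹) = cs.inversionParity v (s i) := by
    have h := cs.inversionParity_mul v v⁻¹ (v * s i * v⁻¹)
    rw [mul_inv_cancel, inversionParity_one, hconj] at h
    exact CharTwo.add_eq_zero.mp h.symm
  rw [inversionParity_mul cs (v * s i) v⁻¹, hconj, hinv, inversionParity_mul,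
    mul_inv_cancel_right, inversionParity_simple, if_pos rfl, add_left_comm,
    CharTwo.add_self_eq_zero, add_zero]

theorem mem_rightInvSeq_of_inversionParity_eq_one {ω : List B} {t : W}
    (h : cs.inversionParity (π ω) t = 1) : t ∈ ris ω := by
  rw [inversionParity_wordProd] at h
  by_contra hnot
  simp [List.count_eq_zero_of_not_mem hnot] at h

theorem length_mul_lt_of_inversionParity_eq_one {w t : W} (h : cs.inversionParity w t = 1) :
    ℓ (w * t) < ℓ w := by
  obtain ⟨ω, hω, rfl⟩ := cs.exists_isReduced w
  exact (cs.isRightInversion_of_mem_rightInvSeq hω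
    (cs.mem_rightInvSeq_of_inversionParity_eq_one h)).2

theorem inversionParity_eq_zero_of_length_lt {w t : W} (h : ℓ w < ℓ (w * t)) :
    cs.inversionParity w t = 0 := by
  rcases (by decide : ∀ a : ZMod 2, a = 0 ∨ a = 1) (cs.inversionParity w t) with h₀ | h₁
  · exact h₀
  · exact absurd (cs.length_mul_lt_of_inversionParity_eq_one h₁) (by omega)

theorem inversionParity_eq_one_iff {w t : W} (ht : cs.IsReflection t) :
    cs.inversionParity w t = 1 ↔ ℓ (w * t) < ℓ w := by
  refine ⟨cs.length_mul_lt_of_inversionParity_eq_one, fun hlt => ?_⟩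
  have hw : w * t * t = w := by rw [mul_assoc, ht.mul_self, mul_one]
  have hzero : cs.inversionParity (w * t) t = 0 :=
    cs.inversionParity_eq_zero_of_length_lt (by rwa [hw])
  have h := cs.inversionParity_mul (w * t) t t
  rwa [hw, mul_inv_cancel_right, inversionParity_self cs ht, hzero, add_zero] at h

theorem exists_eraseIdx_wordProd_eq_mul {ω : List B} {t : W} (ht : cs.IsReflection t)
    (hlt : ℓ (π ω * t) < ℓ (π ω)) :
    ∃ k < ω.length, π (ω.eraseIdx k) = π ω * t := by
  obtain ⟨k, hk, rfl⟩ := List.mem_iff_getElem.mp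
    (cs.mem_rightInvSeq_of_inversionParity_eq_one ((inversionParity_eq_one_iff cs ht).mpr hlt))
  rw [length_rightInvSeq] at hk
  refine ⟨k, hk, ?_⟩
  rw [← wordProd_mul_getD_rightInvSeq, List.getD_eq_getElem]

variable {cs} in
theorem IsReflection.eq_simple_of_length_mul_lt {u t : W} (ht : cs.IsReflection t) {i : B}
    (hut : ℓ u < ℓ (u * t)) (huts : ℓ (u * t * s i) < ℓ (u * s i)) : t = s i := by
  have ht' : cs.IsReflection (s i * t * s i) := by simpa using ht.conj (s i)
  have hone : cs.inversionParity (u * s i) (s i * t * s i) = 1 := by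
    rw [inversionParity_eq_one_iff cs ht']
    simpa [mul_assoc] using huts
  -- `s i * t * s i` is a descent of `u * s i` while `t` is none of `u`, so by the cocycle
  -- identity the parity `1` must come from `s i` itself
  rw [inversionParity_mul, inversionParity_simple] at hone
  simp only [mul_assoc, mul_eq_left, simple_mul_simple_cancel_left, inv_simple,
    simple_mul_simple_self, mul_one, cs.inversionParity_eq_zero_of_length_lt hut, add_zero,
    ite_eq_left_iff, zero_ne_one, imp_false, Decidable.not_not] at hone
  rwa [mul_eq_one_iff_eq_inv, inv_simple] at hone

def ReflectionStep (a b : W) : Prop := ∃ t, cs.IsReflection t ∧ b = a * t ∧ ℓ a < ℓ b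

def ChainLE : W → W → Prop := Relation.ReflTransGen cs.ReflectionStep

theorem exists_sublist_of_chainLE {x : W} {ω : List B} (h : cs.ChainLE x (π ω)) :
    ∃ τ, τ <+ ω ∧ π τ = x := by
  generalize hy : π ω = y at h
  induction h generalizing ω with
  | refl => exact ⟨ω, List.Sublist.refl ω, hy⟩
  | @tail b _ _ hstep ih =>
    obtain ⟨t, ht, rfl, hlt⟩ := hstep
    have hb : π ω * t = b := by rw [hy, mul_assoc, ht.mul_self, mul_one]
    obtain ⟨k, -, hk⟩ := cs.exists_eraseIdx_wordProd_eq_mul ht (by rwa [hb, hy])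
    obtain ⟨τ, hτ, rfl⟩ := ih (hk.trans hb)
    exact ⟨τ, hτ.trans (List.eraseIdx_sublist ω k), rfl⟩

variable {cs} in
theorem ChainLE.mul_simple_or {v w : W} (h : cs.ChainLE v w) (i : B) :
    cs.ChainLE (v * s i) w ∨ cs.ChainLE (v * s i) (w * s i) := by
  induction h with
  | refl => exact Or.inr Relation.ReflTransGen.refl
  | @tail u _ _ hstep ih =>
    obtain ⟨t, ht, rfl, hlt⟩ := hstep
    rcases ih with ih | ih
    · exact Or.inl (ih.tail ⟨t, ht, rfl, hlt⟩)
    have ht' : cs.IsReflection (s i * t * s i) := by simpa using ht.conj (s i)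
    have hmul : u * s i * (s i * t * s i) = u * t * s i := by simp [mul_assoc]
    rcases (ht'.length_mul_left_ne (u * s i)).lt_or_gt with hdown | hup
    · rw [hmul] at hdown
      obtain rfl := ht.eq_simple_of_length_mul_lt hlt hdown
      exact Or.inl ih
    · rw [hmul] at hup
      exact Or.inr (ih.tail ⟨_, ht', hmul.symm, hup⟩)

variable {cs} in
theorem IsReduced.chainLE_of_sublist {σ τ : List B} (hσ : cs.IsReduced σ) (h : τ <+ σ) :
    cs.ChainLE (π τ) (π σ) := by
  induction σ using List.reverseRecOn generalizing τ with
  | nil => rw [List.sublist_nil.mp h]; exact Relation.ReflTransGen.refl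
  | append_singleton σ i ih =>
    have hσ' : cs.IsReduced σ := by simpa using hσ.take σ.length
    have hstep : cs.ReflectionStep (π σ) (π σ * s i) := by
      refine ⟨s i, cs.isReflection_simple i, rfl, ?_⟩
      have hlen := hσ.eq
      rw [wordProd_append, wordProd_singleton, List.length_append, List.length_singleton] at hlen
      rw [hlen, hσ'.eq]
      omega
    obtain ⟨τ, ρ, rfl, hτ, hρ⟩ := List.sublist_append_iff.mp h
    rw [wordProd_append, wordProd_append, wordProd_singleton]
    rcases List.sublist_singleton.mp hρ with rfl | rfl
    · rw [wordProd_nil, mul_one]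
      exact (ih hσ' hτ).tail hstep
    · rw [wordProd_singleton]
      rcases (ih hσ' hτ).mul_simple_or i with hle | hle
      · exact hle.tail hstep
      · exact hle

theorem bruhatLE_iff_chainLE {x y : W} : cs.bruhatLE x y ↔ cs.ChainLE x y := by
  constructor
  · rintro ⟨ω, τ, hω, rfl, hτ, rfl⟩
    exact hω.chainLE_of_sublist hτ
  · intro h
    obtain ⟨ω, hω, rfl⟩ := cs.exists_isReduced y
    obtain ⟨τ, hτ, rfl⟩ := cs.exists_sublist_of_chainLE h
    exact ⟨ω, τ, hω, rfl, hτ, rfl⟩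

variable {cs} in
theorem IsReduced.bruhatLE_wordProd_iff {ω : List B} (hω : cs.IsReduced ω) {x : W} :
    cs.bruhatLE x (π ω) ↔ ∃ τ, τ <+ ω ∧ π τ = x :=
  ⟨fun h => cs.exists_sublist_of_chainLE ((bruhatLE_iff_chainLE cs).mp h),
    fun ⟨τ, hτ, hx⟩ => ⟨ω, τ, hω, rfl, hτ, hx⟩⟩

theorem bruhatLE_refl (x : W) : cs.bruhatLE x x :=
  (bruhatLE_iff_chainLE cs).mpr Relation.ReflTransGen.refl

theorem bruhatLE_trans {x y z : W} (hxy : cs.bruhatLE x y) (hyz : cs.bruhatLE y z) :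
    cs.bruhatLE x z := by
  rw [bruhatLE_iff_chainLE] at *
  exact Relation.ReflTransGen.trans hxy hyz

theorem length_lt_of_bruhatLE_of_ne {x y : W} (h : cs.bruhatLE x y) (hne : x ≠ y) :
    ℓ x < ℓ y := by
  obtain ⟨ω, τ, hω, rfl, hτ, rfl⟩ := h
  have hlen : τ.length < ω.length :=
    lt_of_le_of_ne hτ.length_le fun hlen => hne (congrArg _ (hτ.eq_of_length hlen))
  calc ℓ (π τ) ≤ τ.length := cs.length_wordProd_le τ
    _ < ω.length := hlen
    _ = ℓ (π ω) := hω.symm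

variable {cs} in
theorem IsReduced.cons {ω : List B} (hω : cs.IsReduced ω) {i : B}
    (h : ℓ (π ω) < ℓ (s i * π ω)) :
    cs.IsReduced (i :: ω) := by
  have := cs.length_simple_mul (π ω) i
  rw [IsReduced, wordProd_cons, List.length_cons, ← hω.eq]
  omega

variable {cs} in
theorem IsReduced.bruhatLE_wordProd_cons_iff {i : B} {ω : List B} (hω : cs.IsReduced (i :: ω))
    {x : W} :
    cs.bruhatLE x (π (i :: ω)) ↔ cs.bruhatLE x (π ω) ∨ cs.bruhatLE (s i * x) (π ω) := by
  have hω' : cs.IsReduced ω := by simpa using hω.drop 1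
  rw [hω.bruhatLE_wordProd_iff, hω'.bruhatLE_wordProd_iff, hω'.bruhatLE_wordProd_iff]
  constructor
  · rintro ⟨τ, hτ, rfl⟩
    rcases List.sublist_cons_iff.mp hτ with hτ | ⟨ρ, rfl, hρ⟩
    · exact Or.inl ⟨τ, hτ, rfl⟩
    · exact Or.inr ⟨ρ, hρ, by rw [wordProd_cons, simple_mul_simple_cancel_left]⟩
  · rintro (⟨τ, hτ, rfl⟩ | ⟨ρ, hρ, hx⟩)
    · exact ⟨τ, hτ.cons i, rfl⟩
    · refine ⟨i :: ρ, hρ.cons_cons i, ?_⟩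
      rw [wordProd_cons, hx, simple_mul_simple_cancel_left]

theorem bruhatLE_simple_mul_of_length_lt {z : W} {i : B} (h : ℓ z < ℓ (s i * z)) :
    cs.bruhatLE z (s i * z) := by
  obtain ⟨ω, hω, rfl⟩ := cs.exists_isReduced z
  rw [← wordProd_cons, (hω.cons h).bruhatLE_wordProd_cons_iff]
  exact Or.inl (cs.bruhatLE_refl _)

theorem bruhatLE_or_simple_mul_bruhatLE_of_length_lt {z z' : W} {i : B} (h : ℓ (s i * z) < ℓ z)
    (hz : cs.bruhatLE z' z) : cs.bruhatLE z' (s i * z) ∨ cs.bruhatLE (s i * z') (s i * z) := by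
  obtain ⟨ω, hω, hω_eq⟩ := cs.exists_isReduced (s i * z)
  have hz_eq : π (i :: ω) = z := by rw [wordProd_cons, ← hω_eq, simple_mul_simple_cancel_left]
  have hred : cs.IsReduced (i :: ω) := hω.cons (by rwa [← wordProd_cons, hz_eq, ← hω_eq])
  rwa [← hz_eq, hred.bruhatLE_wordProd_cons_iff, ← hω_eq] at hz

theorem exists_bruhatLE_mul_bruhatLE_mul (u : W) {y y' : W} (hy : cs.bruhatLE y' y) :
    ∃ v, cs.bruhatLE v u ∧ cs.bruhatLE (v * y') (u * y) := by
  obtain ⟨ω, hω, rfl⟩ := cs.exists_isReduced u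
  induction ω with
  | nil => exact ⟨1, cs.bruhatLE_refl 1, by simpa using hy⟩
  | cons i ω ih =>
    obtain ⟨v, hv, hvy⟩ := ih (by simpa using hω.drop 1)
    have hv₁ : cs.bruhatLE v (s i * π ω) := by
      rw [← wordProd_cons, hω.bruhatLE_wordProd_cons_iff]
      exact Or.inl hv
    have hv₂ : cs.bruhatLE (s i * v) (s i * π ω) := by
      rw [← wordProd_cons, hω.bruhatLE_wordProd_cons_iff, simple_mul_simple_cancel_left]
      exact Or.inr hv
    rw [wordProd_cons, mul_assoc]
    rcases (cs.length_simple_mul_ne (π ω * y) i).lt_or_gt with hdown | hup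
    · rcases cs.bruhatLE_or_simple_mul_bruhatLE_of_length_lt hdown hvy with h | h
      · exact ⟨v, hv₁, h⟩
      · exact ⟨s i * v, hv₂, by rwa [mul_assoc]⟩
    · exact ⟨v, hv₁, cs.bruhatLE_trans hvy (cs.bruhatLE_simple_mul_of_length_lt hup)⟩

variable {cs} in
theorem IsUniqueBruhatMin.bruhatLE_of_mem {S : Set W} {m : W} (hm : cs.IsUniqueBruhatMin S m)
    {z : W} (hz : z ∈ S) : cs.bruhatLE m z := by
  induction hn : ℓ z using Nat.strong_induction_on generalizing z with
  | _ n ih =>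
    by_cases hmin : ∀ z' ∈ S, cs.bruhatLE z' z → z' = z
    · rw [hm.2 z hz hmin]
      exact cs.bruhatLE_refl m
    · push Not at hmin
      obtain ⟨z', hz', hle, hne⟩ := hmin
      exact cs.bruhatLE_trans (ih _ (hn ▸ cs.length_lt_of_bruhatLE_of_ne hle hne) hz' rfl) hle

end CoxeterSystem

/-- `▷` is antitone in the first argument and monotone in the second:
if `x ≤ x'` and `y' ≤ y` then `x' ▷ y' ≤ x ▷ y`. -/
theorem tri_antitone_monotone {B W : Type*} [Group W] {M : CoxeterMatrix B} (cs : CoxeterSystem M W)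
    (tri : W → W → W)
    (htri : ∀ x y : W, cs.IsUniqueBruhatMin (cs.triSet x y) (tri x y))
    (x x' y y' : W) (hx : cs.bruhatLE x x') (hy : cs.bruhatLE y' y) :
    cs.bruhatLE (tri x' y') (tri x y) := by
  obtain ⟨⟨⟨u, hux, hu⟩, -⟩, -⟩ := htri x y
  obtain ⟨v, hvu, hv⟩ := cs.exists_bruhatLE_mul_bruhatLE_mul u hy
  have hvx' : cs.bruhatLE v x' := cs.bruhatLE_trans (cs.bruhatLE_trans hvu hux) hx
  rw [hu]
  exact cs.bruhatLE_trans ((htri x' y').bruhatLE_of_mem ⟨v, hvx', rfl⟩) hv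
end

section
/- Let W be a finite Coxeter group with longest element w₀. Then for all x, y ∈ W, (x ▷ y)·w₀ = x ∗ (y·w₀). -/
/-!
Every element lies below `w₀`, so every reflection is a left inversion of `w₀`, and comparing
inversion signs gives `ℓ (v * w₀) + ℓ v = ℓ w₀` for all `v`: right multiplication by `w₀`
reverses lengths. Computing `x ∗ v` along a reduced word for `x` shows that it is some `u₀ * v`
with `u₀ ≤ x`, and that it dominates every `u * v` with `u ≤ x` in the chain order, since each
step `s ∗ -` dominates `s * -` (Deodhar's lifting property). Hence `(x ∗ (y * w₀)) * w₀⁻¹ = u₀ * y`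
has minimal length in `{u * y | u ≤ x}`, so it is Bruhat-minimal there and equals `x ▷ y`.

The strong exchange property behind the lifting property comes from the homomorphism
`W → (W → ℤˣ) ⋊ W` whose first component records, as a sign, the parity of the number of
occurrences of each element in the left inversion sequence of any word for the argument.
-/

open List

namespace CoxeterSystem

variable {B W : Type*} [Group W] {M : CoxeterMatrix B} (cs : CoxeterSystem M W)

local prefix:100 "s" => cs.simple
local prefix:100 "π" => cs.wordProd
local prefix:100 "ℓ" => cs.length
local prefix:100 "lis" => cs.leftInvSeq

section

open scoped Classical

abbrev SignTwist (W : Type*) [Group W] :=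
  (W → ℤˣ) ⋊[mulAutArrow.comp (MulAut.conj : W →* MulAut W)] W

noncomputable def signGen (w : W) : SignTwist W := ⟨fun t => if t = w then -1 else 1, w⟩

lemma signTwist_mul_left_apply (a b : SignTwist W) (t : W) :
    (a * b).left t = a.left t * b.left (a.right⁻¹ * t * a.right) := rfl

@[simp] lemma signGen_right (c : W) : (signGen c).right = c := rfl

lemma signGen_left_apply (c t : W) : (signGen c).left t = if t = c then -1 else 1 := rfl

lemma signGen_left_conj (g c t : W) :
    (signGen c).left (g⁻¹ * t * g) = (signGen (g * c * g⁻¹)).left t := by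
  simp only [signGen_left_apply]
  congr 1
  exact propext ⟨fun h => by rw [← h]; group, fun h => by rw [h]; group⟩

lemma signGen_mul_pow {a b : W} (ha : a * a = 1) (hb : b * b = 1) (k : ℕ) :
    (signGen a * signGen b) ^ k =
      ⟨fun t => ∏ p ∈ Finset.range (2 * k), (signGen ((a * b) ^ p * a)).left t, (a * b) ^ k⟩ := by
  have hab : (a * b)⁻¹ = b * a := by
    rw [mul_inv_rev, inv_eq_of_mul_eq_one_left ha, inv_eq_of_mul_eq_one_left hb]
  induction k with
  | zero => ext <;> simp
  | succ k ih =>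
    rw [pow_succ', ih]
    refine SemidirectProduct.ext (funext fun t => ?_) (pow_succ' _ _).symm
    have hconj (p : ℕ) : a * b * ((a * b) ^ p * a) * (a * b)⁻¹ = (a * b) ^ (p + 1 + 1) * a := by
      rw [hab, ← mul_assoc (a * b), ← pow_succ', pow_succ _ (p + 1)]
      simp only [mul_assoc]
    have hfirst : a * b * a⁻¹ = (a * b) ^ (0 + 1) * a := by
      rw [zero_add, pow_one, inv_eq_of_mul_eq_one_left ha]
    simp only [signTwist_mul_left_apply, SemidirectProduct.mul_right, signGen_right,
      signGen_left_conj, hconj, hfirst, Finset.prod_range_succ', Nat.mul_succ, pow_zero, one_mul]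
    ac_rfl

lemma isLiftable_signGen : M.IsLiftable fun i => signGen (s i) := by
  intro i j
  have hm := cs.simple_mul_simple_pow i j
  rw [signGen_mul_pow (cs.simple_mul_simple_self i) (cs.simple_mul_simple_self j)]
  refine SemidirectProduct.ext (funext fun t => ?_) hm
  have hperiodic (p : ℕ) : (s i * s j) ^ (M i j + p) * s i = (s i * s j) ^ p * s i := by
    rw [pow_add, hm, one_mul]
  simp only [two_mul, Finset.prod_range_add, hperiodic, Int.units_mul_self]
  rfl

noncomputable def signHom : W →* SignTwist W := cs.lift ⟨_, cs.isLiftable_signGen⟩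

noncomputable def inversionSign (w t : W) : ℤˣ := (cs.signHom w).left t

@[simp] lemma signHom_right (w : W) : (cs.signHom w).right = w := by
  have : SemidirectProduct.rightHom.comp cs.signHom = MonoidHom.id W :=
    cs.ext_simple fun i => by simp [signHom]
  exact DFunLike.congr_fun this w

lemma inversionSign_mul (w₁ w₂ t : W) :
    cs.inversionSign (w₁ * w₂) t = cs.inversionSign w₁ t * cs.inversionSign w₂ (w₁⁻¹ * t * w₁) := by
  simp [inversionSign, signTwist_mul_left_apply]

lemma inversionSign_simple (i : B) (t : W) :
    cs.inversionSign (s i) t = if t = s i then -1 else 1 := by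
  simp [inversionSign, signHom, signGen_left_apply]

lemma inversionSign_wordProd (ω : List B) (t : W) :
    cs.inversionSign (π ω) t = (-1) ^ (lis ω).count t := by
  induction ω generalizing t with
  | nil => simp [inversionSign]
  | cons i ω ih =>
    have hcount : (List.map (MulAut.conj (s i)) (lis ω)).count t =
        (lis ω).count ((s i)⁻¹ * t * s i) := by
      conv_lhs => rw [show t = MulAut.conj (s i) ((s i)⁻¹ * t * s i) by simp [mul_assoc]]
      exact List.count_map_of_injective _ _ (MulAut.conj (s i)).injective _
    rw [wordProd_cons, inversionSign_mul, inversionSign_simple, ih, leftInvSeq, List.count_cons,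
      hcount, pow_add]
    split_ifs <;> simp_all [mul_comm]

lemma inversionSign_self {t : W} (ht : cs.IsReflection t) : cs.inversionSign t t = -1 := by
  obtain ⟨w, i, rfl⟩ := ht
  have hconj : w⁻¹ * (w * s i * w⁻¹) * w = s i := by group
  have hone := cs.inversionSign_mul w w⁻¹ (w * s i * w⁻¹)
  rw [mul_inv_cancel, hconj] at hone
  nth_rw 1 [mul_assoc w]
  rw [inversionSign_mul, hconj, inversionSign_mul, inversionSign_simple, inv_simple,
    if_pos rfl, simple_mul_simple_self, one_mul, neg_one_mul, mul_neg, ← hone]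
  simp [inversionSign]

lemma isLeftInversion_of_inversionSign_eq_neg_one {w t : W} (h : cs.inversionSign w t = -1) :
    cs.IsLeftInversion w t := by
  obtain ⟨ω, hω, rfl⟩ := cs.exists_isReduced w
  refine cs.isLeftInversion_of_mem_leftInvSeq hω (List.count_pos_iff.mp (Nat.pos_of_ne_zero ?_))
  intro h0
  rw [inversionSign_wordProd, h0, pow_zero] at h
  exact absurd h (by decide)

lemma inversionSign_eq_neg_one_iff {w t : W} (ht : cs.IsReflection t) :
    cs.inversionSign w t = -1 ↔ cs.IsLeftInversion w t := by
  refine ⟨cs.isLeftInversion_of_inversionSign_eq_neg_one, fun hw => ?_⟩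
  refine (Int.units_eq_one_or _).resolve_left fun h1 =>
    ht.not_isLeftInversion_mul_right_iff.mpr hw ?_
  apply cs.isLeftInversion_of_inversionSign_eq_neg_one
  rw [inversionSign_mul, cs.inversionSign_self ht, ht.inv, ht.mul_self, one_mul, h1, mul_one]

lemma mem_leftInvSeq_of_isLeftInversion {ω : List B} {t : W}
    (h : cs.IsLeftInversion (π ω) t) : t ∈ lis ω := by
  rw [← (cs.inversionSign_eq_neg_one_iff h.1), inversionSign_wordProd] at h
  by_contra hmem
  rw [List.count_eq_zero.mpr hmem, pow_zero] at h
  exact absurd h (by decide)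

theorem exists_eraseIdx_of_isLeftInversion {ω : List B} {t : W}
    (h : cs.IsLeftInversion (π ω) t) : ∃ j < ω.length, t * π ω = π (ω.eraseIdx j) := by
  obtain ⟨j, hj, rfl⟩ := List.getElem_of_mem (cs.mem_leftInvSeq_of_isLeftInversion h)
  refine ⟨j, by simpa using hj, ?_⟩
  rw [← getD_leftInvSeq_mul_wordProd, List.getD_eq_getElem _ _ hj]

end

lemma length_mul_add_length_of_forall_isLeftInversion {w₀ : W}
    (h : ∀ t, cs.IsReflection t → cs.IsLeftInversion w₀ t) (v : W) :
    ℓ (v * w₀) + ℓ v = ℓ w₀ := by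
  induction v using cs.simple_induction_left with
  | one => simp
  | mul_simple_left v i ih =>
    have hdescent : cs.IsLeftDescent v i ↔ ¬ cs.IsLeftDescent (v * w₀) i := by
      have hconj : cs.IsReflection (v⁻¹ * s i * v) := by
        simpa using (cs.isReflection_simple i).conj v⁻¹
      simp only [← isLeftInversion_simple_iff_isLeftDescent,
        ← cs.inversionSign_eq_neg_one_iff (cs.isReflection_simple i), inversionSign_mul,
        (cs.inversionSign_eq_neg_one_iff hconj).mpr (h _ hconj)]
      rcases Int.units_eq_one_or (cs.inversionSign v (s i)) with h1 | h1 <;> simp [h1]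
    unfold IsLeftDescent at hdescent
    rw [mul_assoc]
    rcases cs.length_simple_mul v i with h1 | h1 <;>
      rcases cs.length_simple_mul (v * w₀) i with h2 | h2 <;> omega

section

variable {cs}

theorem bruhatLE.length_le {u w : W} (h : cs.bruhatLE u w) : ℓ u ≤ ℓ w := by
  obtain ⟨ω, ω', hω, rfl, hsub, rfl⟩ := h
  exact (length_wordProd_le cs ω').trans (hω.eq ▸ hsub.length_le)

theorem bruhatLE.eq_of_length_le {u w : W} (h : cs.bruhatLE u w) (hlen : ℓ w ≤ ℓ u) : u = w := by
  obtain ⟨ω, ω', hω, rfl, hsub, rfl⟩ := h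
  rw [hsub.eq_of_length_le ((hω.eq.symm.trans_le hlen).trans (length_wordProd_le cs ω'))]

theorem IsUniqueBruhatMin.eq_of_forall_length_le {S : Set W} {m z : W}
    (h : cs.IsUniqueBruhatMin S m) (hz : z ∈ S) (hmin : ∀ z' ∈ S, ℓ z ≤ ℓ z') : z = m :=
  h.2 z hz fun z' hz' hle => hle.eq_of_length_le (hmin z' hz')

theorem length_mul_add_length_of_forall_bruhatLE {w₀ : W} (h : ∀ v, cs.bruhatLE v w₀) (v : W) :
    ℓ (v * w₀) + ℓ v = ℓ w₀ :=
  cs.length_mul_add_length_of_forall_isLeftInversion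
    (fun _ ht => ⟨ht, (h _).length_le.lt_of_ne (ht.length_mul_right_ne w₀)⟩) v

end

def BruhatStep (a b : W) : Prop := ∃ t, cs.IsReflection t ∧ a = t * b ∧ ℓ a < ℓ b

/-- The Bruhat order in its chain form, as opposed to the subword form `bruhatLE`. -/
def BruhatChainLE : W → W → Prop := Relation.ReflTransGen cs.BruhatStep

theorem bruhatStep_simple_mul {i : B} {w : W} (h : cs.IsLeftDescent w i) :
    cs.BruhatStep (s i * w) w :=
  ⟨s i, cs.isReflection_simple i, rfl, h⟩

noncomputable def demazureSimpleMul (i : B) (w : W) : W :=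
  if ℓ w < ℓ (s i * w) then s i * w else w

theorem bruhatChainLE_demazureSimpleMul (i : B) (w : W) :
    cs.BruhatChainLE w (cs.demazureSimpleMul i w) := by
  unfold demazureSimpleMul
  split_ifs with h
  · refine .single ?_
    simpa using cs.bruhatStep_simple_mul (i := i) (w := s i * w) (by simpa [IsLeftDescent] using h)
  · exact .refl

theorem simple_mul_bruhatChainLE_demazureSimpleMul (i : B) (w : W) :
    cs.BruhatChainLE (s i * w) (cs.demazureSimpleMul i w) := by
  unfold demazureSimpleMul
  split_ifs with h
  · exact .refl
  · refine .single (cs.bruhatStep_simple_mul ?_)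
    have := cs.length_simple_mul_ne w i
    unfold IsLeftDescent
    omega

/-- Apply strong exchange to a reduced word `i :: ρ` of `c`: deleting a letter of `ρ` instead of
the leading `i` would make `s i * (t * c)` shorter than `t * c`. -/
theorem simple_mul_mul_eq_of_isLeftDescent {t c : W} {i : B} (ht : cs.IsReflection t)
    (hc : cs.IsLeftDescent c i) (hlen : ℓ (t * c) + 1 = ℓ c)
    (hasc : ¬ cs.IsLeftDescent (t * c) i) : s i * (t * c) = c := by
  obtain ⟨ρ, hρ, hρc⟩ := cs.exists_isReduced (s i * c)
  have hcword : c = π (i :: ρ) := by rw [wordProd_cons, ← hρc, simple_mul_simple_cancel_left]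
  have hinv : cs.IsLeftInversion (π (i :: ρ)) t := ⟨ht, by rw [← hcword]; omega⟩
  obtain ⟨j, hj, hexch⟩ := cs.exists_eraseIdx_of_isLeftInversion hinv
  rw [← hcword] at hexch
  cases j with
  | zero => rw [hexch, eraseIdx_cons_zero, ← hρc, simple_mul_simple_cancel_left]
  | succ j =>
    exfalso
    have hsa : s i * (t * c) = π (ρ.eraseIdx j) := by
      rw [hexch, eraseIdx_cons_succ, wordProd_cons, simple_mul_simple_cancel_left]
    rw [length_cons, Nat.add_lt_add_iff_right] at hj
    have hshort := cs.length_wordProd_le (ρ.eraseIdx j)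
    rw [length_eraseIdx_of_lt hj, ← hsa] at hshort
    unfold IsLeftDescent at hc hasc
    have := hρ.eq
    rw [← hρc] at this
    omega

section

variable {cs}

theorem BruhatChainLE.length_le {a b : W} (h : cs.BruhatChainLE a b) : ℓ a ≤ ℓ b := by
  induction h with
  | refl => exact le_rfl
  | tail _ hstep ih =>
    obtain ⟨t, -, -, hlt⟩ := hstep
    omega

theorem BruhatChainLE.simple_mul_le_demazureSimpleMul {a b : W} (h : cs.BruhatChainLE a b)
    (i : B) : cs.BruhatChainLE (s i * a) (cs.demazureSimpleMul i b) := by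
  induction h using Relation.ReflTransGen.head_induction_on with
  | refl => exact cs.simple_mul_bruhatChainLE_demazureSimpleMul i b
  | @head a c hstep hcb ih =>
    obtain ⟨t, ht, rfl, hlt⟩ := hstep
    have hc : cs.BruhatChainLE c (cs.demazureSimpleMul i b) :=
      hcb.trans (cs.bruhatChainLE_demazureSimpleMul i b)
    by_cases hdesc : cs.IsLeftDescent (t * c) i
    · exact .head (cs.bruhatStep_simple_mul hdesc) (.head ⟨t, ht, rfl, hlt⟩ hc)
    by_cases hlt' : ℓ (s i * (t * c)) < ℓ (s i * c)
    · exact .head ⟨s i * t * (s i)⁻¹, ht.conj (s i), by group, hlt'⟩ ih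
    · have hne : ℓ (s i * (t * c)) ≠ ℓ (s i * c) := by
        simpa [mul_assoc] using (ht.conj (s i)).length_mul_right_ne (s i * c)
      have h1 := cs.length_simple_mul (t * c) i
      have h2 := cs.length_simple_mul c i
      unfold IsLeftDescent at hdesc
      rw [cs.simple_mul_mul_eq_of_isLeftDescent ht (by unfold IsLeftDescent; omega) (by omega)
        hdesc]
      exact hc

end

noncomputable def demazureWordMul (ω : List B) (v : W) : W := ω.foldr cs.demazureSimpleMul v

theorem bruhatChainLE_wordProd_mul_demazureWordMul {ω' ω : List B} (h : ω' <+ ω) (v : W) :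
    cs.BruhatChainLE (π ω' * v) (cs.demazureWordMul ω v) := by
  induction h with
  | slnil =>
    rw [wordProd_nil, one_mul]
    exact .refl
  | cons i _ ih => exact ih.trans (cs.bruhatChainLE_demazureSimpleMul i _)
  | cons_cons i _ ih =>
    rw [wordProd_cons, mul_assoc]
    exact ih.simple_mul_le_demazureSimpleMul i

theorem exists_sublist_demazureWordMul_eq (ω : List B) (v : W) :
    ∃ ω', ω' <+ ω ∧ cs.demazureWordMul ω v = π ω' * v := by
  induction ω with
  | nil => exact ⟨[], .slnil, by simp [demazureWordMul]⟩
  | cons i ω ih =>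
    obtain ⟨ω', hsub, heq⟩ := ih
    rw [demazureWordMul, foldr_cons, ← demazureWordMul, heq, demazureSimpleMul]
    split_ifs
    · exact ⟨i :: ω', hsub.cons_cons i, by rw [wordProd_cons, mul_assoc]⟩
    · exact ⟨ω', hsub.cons i, rfl⟩

structure IsDemazureProduct (star : W → W → W) : Prop where
  one_star : ∀ w, star 1 w = w
  simple_star : ∀ i w, star (s i) w = cs.demazureSimpleMul i w
  star_assoc : ∀ a b c, star (star a b) c = star a (star b c)

namespace IsDemazureProduct

variable {cs} {star : W → W → W} (hstar : cs.IsDemazureProduct star)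
include hstar

theorem wordProd_star {ω : List B} (hω : cs.IsReduced ω) (v : W) :
    star (π ω) v = cs.demazureWordMul ω v := by
  induction ω with
  | nil => exact hstar.one_star v
  | cons i ω ih =>
    have hasc : ℓ (π ω) < ℓ (s i * π ω) := by
      have := hω.eq
      have := length_wordProd_le cs ω
      simp only [wordProd_cons, length_cons] at *
      omega
    calc star (π (i :: ω)) v = star (star (s i) (π ω)) v := by
          rw [hstar.simple_star, demazureSimpleMul, if_pos hasc, wordProd_cons]
      _ = cs.demazureSimpleMul i (star (π ω) v) := by rw [hstar.star_assoc, hstar.simple_star]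
      _ = cs.demazureWordMul (i :: ω) v := by rw [ih (by simpa using hω.drop 1)]; rfl

theorem exists_bruhatLE_star_eq_mul (x v : W) : ∃ u, cs.bruhatLE u x ∧ star x v = u * v := by
  obtain ⟨ω, hω, rfl⟩ := cs.exists_isReduced x
  obtain ⟨ω', hsub, heq⟩ := cs.exists_sublist_demazureWordMul_eq ω v
  exact ⟨π ω', ⟨ω, ω', hω, rfl, hsub, rfl⟩, by rw [hstar.wordProd_star hω, heq]⟩

theorem length_mul_le_length_star {u x : W} (hu : cs.bruhatLE u x) (v : W) :
    ℓ (u * v) ≤ ℓ (star x v) := by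
  obtain ⟨ω, ω', hω, rfl, hsub, rfl⟩ := hu
  rw [hstar.wordProd_star hω]
  exact (cs.bruhatChainLE_wordProd_mul_demazureWordMul hsub v).length_le

end IsDemazureProduct

end CoxeterSystem

theorem tri_mul_longest_general {B W : Type*} [Group W] {M : CoxeterMatrix B} (cs : CoxeterSystem M W)
    (star : W → W → W)
    (hstar_one : ∀ w : W, star 1 w = w)
    (hstar_simple : ∀ (i : B) (w : W), star (cs.simple i) w =
      if cs.length w < cs.length (cs.simple i * w) then cs.simple i * w else w)
    (hstar_assoc : ∀ a b c : W, star (star a b) c = star a (star b c))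
    (tri : W → W → W)
    (htri : ∀ x y : W, cs.IsUniqueBruhatMin (cs.triSet x y) (tri x y))
    (w0 : W) (hw0 : ∀ v : W, cs.bruhatLE v w0)
    (x y : W) :
    tri x y * w0 = star x (y * w0) := by
  have hstar : cs.IsDemazureProduct star := ⟨hstar_one, hstar_simple, hstar_assoc⟩
  obtain ⟨u₀, hu₀, hx⟩ := hstar.exists_bruhatLE_star_eq_mul x (y * w0)
  have hm : star x (y * w0) * w0⁻¹ ∈ cs.triSet x y :=
    ⟨u₀, hu₀, by rw [hx, ← mul_assoc, mul_inv_cancel_right]⟩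
  have hm_min : ∀ z ∈ cs.triSet x y, cs.length (star x (y * w0) * w0⁻¹) ≤ cs.length z := by
    rintro _ ⟨u, hu, rfl⟩
    have hle := hstar.length_mul_le_length_star hu (y * w0)
    have hm_len := cs.length_mul_add_length_of_forall_bruhatLE hw0 (star x (y * w0) * w0⁻¹)
    have hz_len := cs.length_mul_add_length_of_forall_bruhatLE hw0 (u * y)
    rw [inv_mul_cancel_right] at hm_len
    rw [mul_assoc] at hz_len
    omega
  rw [← (htri x y).eq_of_forall_length_le hm hm_min, inv_mul_cancel_right]

/-- In a finite Coxeter group with longest element `w₀`, `(x ▷ y) * w₀ = x ∗ (y * w₀)`. -/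
theorem tri_mul_longest {B W : Type*} [Group W] {M : CoxeterMatrix B} (cs : CoxeterSystem M W) [Finite W]
    (star : W → W → W)
    (hstar_one : ∀ w : W, star 1 w = w)
    (hstar_simple : ∀ (i : B) (w : W), star (cs.simple i) w =
      if cs.length w < cs.length (cs.simple i * w) then cs.simple i * w else w)
    (hstar_assoc : ∀ a b c : W, star (star a b) c = star a (star b c))
    (tri : W → W → W)
    (htri : ∀ x y : W, cs.IsUniqueBruhatMin (cs.triSet x y) (tri x y))
    (w0 : W) (hw0 : ∀ v : W, cs.bruhatLE v w0)
    (x y : W) :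
    tri x y * w0 = star x (y * w0) :=
  tri_mul_longest_general cs star hstar_one hstar_simple hstar_assoc tri htri w0 hw0 x y
end
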